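/- For nonzero integers r₁, s₁, r₂, s₂, integers x₁, y₁, x₂, y₂ and positive integers D₁, D₂, the normalized Fourier transform Ŝ_{r₁,s₁,r₂,s₂}(x₁,y₁,x₂,y₂; D₁,D₂) of the long-element GL(3) Kloosterman sum satisfies |Ŝ_{r₁,s₁,r₂,s₂}(x₁,y₁,x₂,y₂; D₁,D₂)| ≤ gcd(r₁,D₁)·gcd(r₂,D₂)·gcd(D₁,D₂). -/

import Mathlib

/-!
Expanding `SKl` inside `Shat` and summing over `n₁, m₁, n₂, m₂` first, every one of the four
sums is a complete geometric sum of `D`-th roots of unity, equal to `D` or `0` according as a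
linear form is divisible by `D`. The normalisation `1 / (D₁² D₂²)` cancels exactly, so `Ŝ` counts
the tuples `(B₁, C₁, B₂, C₂)` of the Kloosterman sum satisfying four linear congruences. Keeping
only `r₁B₁ ≡ y₁ (mod D₁)`, `r₂B₂ ≡ x₂ (mod D₂)` and the relation
`D₁C₂ + B₁B₂ + D₂C₁ ≡ 0 (mod D₁D₂)` gives the bound: the first two have at most `gcd(rⱼ, Dⱼ)`
solutions each, and for fixed `B₁, B₂` the third determines `C₁` modulo `D₁ / gcd(D₁, D₂)` and
then `C₂` modulo `D₂`.
-/

open scoped BigOperators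

/-- e(x) = exp(2πix). -/
noncomputable def e (x : ℝ) : ℂ := Complex.exp (2 * Real.pi * Complex.I * x)

/-- A choice of a pair `(Y, Z)` with `Y·b + Z·c ≡ 1 (mod D)`, when one exists. -/
noncomputable def YZ (D : ℕ) (b c : ℤ) : ℤ × ℤ :=
  letI := Classical.propDecidable (∃ p : ℤ × ℤ, p.1 * b + p.2 * c ≡ 1 [ZMOD (D : ℤ)])
  if h : ∃ p : ℤ × ℤ, p.1 * b + p.2 * c ≡ 1 [ZMOD (D : ℤ)] then h.choose else (0, 0)

/-- The long Weyl element GL(3) Kloosterman sum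
`S(n₁,m₂,m₁,n₂;D₁,D₂) = ∑ e((n₁B₁ + m₁(Y₁D₂ − Z₁B₂))/D₁ + (m₂B₂ + n₂(Y₂D₁ − Z₂B₁))/D₂)`,
where the sum runs over `B₁,C₁ mod D₁` and `B₂,C₂ mod D₂` with `gcd(B_j,C_j,D_j)=1` and
`D₁C₂ + B₁B₂ + D₂C₁ ≡ 0 mod D₁D₂`, and `Y_jB_j + Z_jC_j ≡ 1 mod D_j`. -/
noncomputable def SKl (n₁ m₂ m₁ n₂ : ℤ) (D₁ D₂ : ℕ) : ℂ :=
  ∑ b₁ ∈ Finset.range D₁, ∑ c₁ ∈ Finset.range D₁,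
    ∑ b₂ ∈ Finset.range D₂, ∑ c₂ ∈ Finset.range D₂,
      if Nat.gcd (Nat.gcd b₁ c₁) D₁ = 1 ∧ Nat.gcd (Nat.gcd b₂ c₂) D₂ = 1 ∧
          (D₁ : ℤ) * c₂ + (b₁ : ℤ) * b₂ + (D₂ : ℤ) * c₁ ≡ 0 [ZMOD ((D₁ : ℤ) * D₂)] then
        e ((((n₁ * b₁ + m₁ * ((YZ D₁ (b₁ : ℤ) (c₁ : ℤ)).1 * D₂
                - (YZ D₁ (b₁ : ℤ) (c₁ : ℤ)).2 * b₂) : ℤ)) : ℝ) / (D₁ : ℝ)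
          + (((m₂ * b₂ + n₂ * ((YZ D₂ (b₂ : ℤ) (c₂ : ℤ)).1 * D₁
                - (YZ D₂ (b₂ : ℤ) (c₂ : ℤ)).2 * b₁) : ℤ)) : ℝ) / (D₂ : ℝ))
      else 0

/-- The normalized Fourier transform of the long Weyl element Kloosterman sum:
`Ŝ_{r₁,s₁,r₂,s₂}(x₁,y₁,x₂,y₂;D₁,D₂) = (1/(D₁²D₂²)) ∑_{n₁,m₁ mod D₁} ∑_{n₂,m₂ mod D₂}
  S(n₁r₁, m₂r₂, m₁s₁, n₂s₂; D₁,D₂) e(−(x₁m₁+y₁n₁)/D₁ − (x₂m₂+y₂n₂)/D₂)`. -/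
noncomputable def Shat (r₁ s₁ r₂ s₂ x₁ y₁ x₂ y₂ : ℤ) (D₁ D₂ : ℕ) : ℂ :=
  (1 / ((D₁ : ℂ) ^ 2 * (D₂ : ℂ) ^ 2)) *
    ∑ n₁ ∈ Finset.range D₁, ∑ m₁ ∈ Finset.range D₁,
      ∑ n₂ ∈ Finset.range D₂, ∑ m₂ ∈ Finset.range D₂,
        SKl ((n₁ : ℤ) * r₁) ((m₂ : ℤ) * r₂) ((m₁ : ℤ) * s₁) ((n₂ : ℤ) * s₂) D₁ D₂ *
          e (-(((x₁ * (m₁ : ℤ) + y₁ * (n₁ : ℤ) : ℤ) : ℝ) / (D₁ : ℝ))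
            - ((x₂ * (m₂ : ℤ) + y₂ * (n₂ : ℤ) : ℤ) : ℝ) / (D₂ : ℝ))

open Finset

lemma e_add (x y : ℝ) : e (x + y) = e x * e y := by
  simp only [e, ← Complex.exp_add, Complex.ofReal_add, mul_add]

lemma e_eq_one_iff (x : ℝ) : e x = 1 ↔ ∃ k : ℤ, x = k := by
  simp only [e, Complex.exp_eq_one_iff]
  refine exists_congr fun k => ?_
  rw [mul_comm (k : ℂ), mul_right_inj' Complex.two_pi_I_ne_zero]
  exact_mod_cast Iff.rfl

lemma sum_range_e_mul_div (D : ℕ) (A : ℤ) :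
    ∑ n ∈ range D, e ((n * A : ℤ) / D) = if (D : ℤ) ∣ A then (D : ℂ) else 0 := by
  rcases Nat.eq_zero_or_pos D with rfl | hD
  · simp
  have hD' : (D : ℝ) ≠ 0 := by positivity
  have hpow (n : ℕ) : e ((n * A : ℤ) / D) = e (A / D) ^ n := by
    rw [e, e, ← Complex.exp_nat_mul]
    congr 1
    push_cast
    ring
  simp only [hpow]
  split_ifs with hA
  · obtain ⟨k, rfl⟩ := hA
    have : e ((D * k : ℤ) / D) = 1 := (e_eq_one_iff _).mpr ⟨k, by push_cast; field_simp⟩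
    simp only [this, one_pow, sum_const, card_range, nsmul_eq_mul, mul_one]
  · have hne : e (A / D) ≠ 1 := by
      rintro hone
      obtain ⟨k, hk⟩ := (e_eq_one_iff _).mp hone
      exact hA ⟨k, by exact_mod_cast (div_eq_iff hD').mp hk |>.trans (mul_comm _ _)⟩
    have hroot : e (A / D) ^ D = 1 := by
      rw [← hpow, (e_eq_one_iff _).mpr ⟨A, by push_cast; field_simp⟩]
    rw [geom_sum_eq hne, hroot, sub_self, zero_div]

lemma sum_sum_comm₄ {α₁ α₂ α₃ α₄ β₁ β₂ β₃ β₄ M : Type*} [AddCommMonoid M]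
    (s₁ : Finset α₁) (s₂ : Finset α₂) (s₃ : Finset α₃) (s₄ : Finset α₄)
    (t₁ : Finset β₁) (t₂ : Finset β₂) (t₃ : Finset β₃) (t₄ : Finset β₄)
    (f : α₁ → α₂ → α₃ → α₄ → β₁ → β₂ → β₃ → β₄ → M) :
    ∑ a₁ ∈ s₁, ∑ a₂ ∈ s₂, ∑ a₃ ∈ s₃, ∑ a₄ ∈ s₄, ∑ b₁ ∈ t₁, ∑ b₂ ∈ t₂, ∑ b₃ ∈ t₃, ∑ b₄ ∈ t₄,
        f a₁ a₂ a₃ a₄ b₁ b₂ b₃ b₄ =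
      ∑ b₁ ∈ t₁, ∑ b₂ ∈ t₂, ∑ b₃ ∈ t₃, ∑ b₄ ∈ t₄, ∑ a₁ ∈ s₁, ∑ a₂ ∈ s₂, ∑ a₃ ∈ s₃, ∑ a₄ ∈ s₄,
        f a₁ a₂ a₃ a₄ b₁ b₂ b₃ b₄ := by
  simpa only [sum_product] using sum_comm (s := s₁ ×ˢ s₂ ×ˢ s₃ ×ˢ s₄) (t := t₁ ×ˢ t₂ ×ˢ t₃ ×ˢ t₄)
    (f := fun a b => f a.1 a.2.1 a.2.2.1 a.2.2.2 b.1 b.2.1 b.2.2.1 b.2.2.2)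

lemma sum_mul_sum₄ {α₁ α₂ α₃ α₄ R : Type*} [CommSemiring R]
    (s₁ : Finset α₁) (s₂ : Finset α₂) (s₃ : Finset α₃) (s₄ : Finset α₄)
    (f₁ : α₁ → R) (f₂ : α₂ → R) (f₃ : α₃ → R) (f₄ : α₄ → R) :
    ∑ a₁ ∈ s₁, ∑ a₂ ∈ s₂, ∑ a₃ ∈ s₃, ∑ a₄ ∈ s₄, f₁ a₁ * f₂ a₂ * f₃ a₃ * f₄ a₄ =
      (∑ a₁ ∈ s₁, f₁ a₁) * (∑ a₂ ∈ s₂, f₂ a₂) * (∑ a₃ ∈ s₃, f₃ a₃) * ∑ a₄ ∈ s₄, f₄ a₄ := by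
  simp only [← mul_sum, ← sum_mul]

lemma sum_e_linear₄ (D₁ D₂ : ℕ) (A₁ A₂ A₃ A₄ : ℤ) :
    ∑ n₁ ∈ range D₁, ∑ m₁ ∈ range D₁, ∑ n₂ ∈ range D₂, ∑ m₂ ∈ range D₂,
        e ((n₁ * A₁ : ℤ) / D₁) * e ((m₁ * A₂ : ℤ) / D₁) * e ((n₂ * A₃ : ℤ) / D₂) *
          e ((m₂ * A₄ : ℤ) / D₂) =
      (if (D₁ : ℤ) ∣ A₁ then (D₁ : ℂ) else 0) * (if (D₁ : ℤ) ∣ A₂ then (D₁ : ℂ) else 0) *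
        (if (D₂ : ℤ) ∣ A₃ then (D₂ : ℂ) else 0) * (if (D₂ : ℤ) ∣ A₄ then (D₂ : ℂ) else 0) := by
  simp only [sum_mul_sum₄, sum_range_e_mul_div]

lemma sum_phase_Shat (r₁ s₁ r₂ s₂ x₁ y₁ x₂ y₂ B₁ B₂ W₁ W₂ : ℤ) (D₁ D₂ : ℕ) :
    ∑ n₁ ∈ range D₁, ∑ m₁ ∈ range D₁, ∑ n₂ ∈ range D₂, ∑ m₂ ∈ range D₂,
        e (((n₁ * r₁ * B₁ + m₁ * s₁ * W₁ : ℤ) : ℝ) / D₁ +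
            ((m₂ * r₂ * B₂ + n₂ * s₂ * W₂ : ℤ) : ℝ) / D₂) *
          e (-(((x₁ * m₁ + y₁ * n₁ : ℤ) : ℝ) / D₁) - ((x₂ * m₂ + y₂ * n₂ : ℤ) : ℝ) / D₂) =
      (if (D₁ : ℤ) ∣ r₁ * B₁ - y₁ then (D₁ : ℂ) else 0) *
        (if (D₁ : ℤ) ∣ s₁ * W₁ - x₁ then (D₁ : ℂ) else 0) *
        (if (D₂ : ℤ) ∣ s₂ * W₂ - y₂ then (D₂ : ℂ) else 0) *
        (if (D₂ : ℤ) ∣ r₂ * B₂ - x₂ then (D₂ : ℂ) else 0) := by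
  rw [← sum_e_linear₄]
  refine sum_congr rfl fun n₁ _ => sum_congr rfl fun m₁ _ => sum_congr rfl fun n₂ _ =>
    sum_congr rfl fun m₂ _ => ?_
  simp only [← e_add]
  congr 1
  push_cast
  ring

theorem Shat_eq_count (r₁ s₁ r₂ s₂ x₁ y₁ x₂ y₂ : ℤ) {D₁ D₂ : ℕ} (hD₁ : D₁ ≠ 0) (hD₂ : D₂ ≠ 0) :
    Shat r₁ s₁ r₂ s₂ x₁ y₁ x₂ y₂ D₁ D₂ =
      ((∑ b₁ ∈ range D₁, ∑ c₁ ∈ range D₁, ∑ b₂ ∈ range D₂, ∑ c₂ ∈ range D₂,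
        if (Nat.gcd (Nat.gcd b₁ c₁) D₁ = 1 ∧ Nat.gcd (Nat.gcd b₂ c₂) D₂ = 1 ∧
            (D₁ : ℤ) * c₂ + (b₁ : ℤ) * b₂ + (D₂ : ℤ) * c₁ ≡ 0 [ZMOD ((D₁ : ℤ) * D₂)]) ∧
          (D₁ : ℤ) ∣ r₁ * b₁ - y₁ ∧
          (D₁ : ℤ) ∣ s₁ * ((YZ D₁ b₁ c₁).1 * D₂ - (YZ D₁ b₁ c₁).2 * b₂) - x₁ ∧
          (D₂ : ℤ) ∣ s₂ * ((YZ D₂ b₂ c₂).1 * D₁ - (YZ D₂ b₂ c₂).2 * b₁) - y₂ ∧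
          (D₂ : ℤ) ∣ r₂ * b₂ - x₂ then 1 else 0 : ℕ) : ℂ) := by
  unfold Shat SKl
  simp only [sum_mul, ite_mul, zero_mul]
  rw [sum_sum_comm₄]
  simp only [sum_ite_irrel, sum_const_zero, sum_phase_Shat, mul_sum, Nat.cast_sum]
  refine sum_congr rfl fun b₁ _ => sum_congr rfl fun c₁ _ => sum_congr rfl fun b₂ _ =>
    sum_congr rfl fun c₂ _ => ?_
  split_ifs <;> simp_all
  field_simp

lemma card_le_of_forall_modEq {s : Finset ℕ} {d g : ℕ} (hs : s ⊆ range (d * g))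
    (h : ∀ a ∈ s, ∀ b ∈ s, a ≡ b [MOD d]) : #s ≤ g := by
  calc #s ≤ #(range g) := by
        refine card_le_card_of_injOn (· / d) (fun a ha => ?_) fun a ha b hb hab => ?_
        · simpa using Nat.div_lt_of_lt_mul (mem_range.mp (hs ha))
        · rw [← Nat.div_add_mod a d, ← Nat.div_add_mod b d, show a / d = b / d from hab,
            h a ha b hb]
    _ = g := card_range g

lemma card_le_gcd_of_mul_modEq {s : Finset ℕ} {D : ℕ} {r : ℤ} (hD : 0 < D) (hs : s ⊆ range D)
    (h : ∀ a ∈ s, ∀ b ∈ s, r * a ≡ r * b [ZMOD D]) : #s ≤ Int.gcd r D := by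
  have hg : Int.gcd r D ∣ D := Int.natCast_dvd_natCast.mp (Int.gcd_dvd_right r D)
  rw [Int.gcd_comm] at hg ⊢
  refine card_le_of_forall_modEq (d := D / Int.gcd D r) (by rwa [Nat.div_mul_cancel hg]) fun a ha b hb => ?_
  have := (h a ha b hb).cancel_left_div_gcd (by exact_mod_cast hD)
  rwa [← Int.natCast_div, Int.natCast_modEq_iff] at this

lemma card_filter_dvd_mul_sub_le_gcd {D : ℕ} (hD : 0 < D) (r y : ℤ) :
    #{b ∈ range D | (D : ℤ) ∣ r * ((b : ℕ) : ℤ) - y} ≤ Int.gcd r D := by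
  refine card_le_gcd_of_mul_modEq hD (filter_subset _ _) fun a ha b hb => ?_
  rw [mem_filter] at ha hb
  exact (Int.modEq_iff_dvd.mpr ha.2).symm.trans (Int.modEq_iff_dvd.mpr hb.2)

lemma card_filter_modEq_zero_le_gcd {D₁ D₂ : ℕ} (hD₁ : 0 < D₁) (t : ℤ) :
    #{p ∈ range D₁ ×ˢ range D₂ |
      (D₁ : ℤ) * p.2 + t + (D₂ : ℤ) * p.1 ≡ 0 [ZMOD (D₁ : ℤ) * D₂]} ≤ Nat.gcd D₁ D₂ := by
  set S := {p ∈ range D₁ ×ˢ range D₂ |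
    (D₁ : ℤ) * p.2 + t + (D₂ : ℤ) * p.1 ≡ 0 [ZMOD (D₁ : ℤ) * D₂]}
  have hS {p q} (hp : p ∈ S) (hq : q ∈ S) :
      (D₁ : ℤ) * p.2 + t + (D₂ : ℤ) * p.1 ≡ (D₁ : ℤ) * q.2 + t + (D₂ : ℤ) * q.1
        [ZMOD (D₁ : ℤ) * D₂] :=
    (mem_filter.mp hp).2.trans (mem_filter.mp hq).2.symm
  have hinj : Set.InjOn Prod.fst (S : Set (ℕ × ℕ)) := by
    intro p hp q hq hpq
    have hpq' := hS (mem_coe.mp hp) (mem_coe.mp hq)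
    rw [hpq] at hpq'
    have h₂ : p.2 ≡ q.2 [MOD D₂] := Int.natCast_modEq_iff.mp <|
      ((hpq'.add_right_cancel' _).add_right_cancel' _).mul_left_cancel' (by positivity)
    have hp₂ := (mem_product.mp (mem_filter.mp (mem_coe.mp hp)).1).2
    have hq₂ := (mem_product.mp (mem_filter.mp (mem_coe.mp hq)).1).2
    exact Prod.ext hpq (h₂.eq_of_lt_of_lt (mem_range.mp hp₂) (mem_range.mp hq₂))
  rw [← card_image_of_injOn hinj, ← Nat.gcd_comm, ← Int.gcd_natCast_natCast]
  refine card_le_gcd_of_mul_modEq hD₁ ?_ ?_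
  · exact image_subset_iff.mpr fun p hp => (mem_product.mp (mem_filter.mp hp).1).1
  · simp only [forall_mem_image]
    intro p hp q hq
    have hpq := (hS hp hq).of_mul_right _
    rw [Int.modEq_iff_dvd] at hpq ⊢
    have : (D₂ : ℤ) * q.1 - D₂ * p.1 =
        (D₁ * q.2 + t + D₂ * q.1) - (D₁ * p.2 + t + D₂ * p.1) - D₁ * (q.2 - p.2) := by ring
    exact this ▸ dvd_sub hpq (dvd_mul_right _ _)

lemma sum_ite_le_mul {ι : Type*} {s : Finset ι} {p : ι → Prop} [DecidablePred p] {f : ι → ℕ}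
    {N M : ℕ} (hN : #{x ∈ s | p x} ≤ N) (hM : ∀ x ∈ s, p x → f x ≤ M) :
    ∑ x ∈ s, (if p x then f x else 0) ≤ N * M := by
  rw [← sum_filter]
  calc ∑ x ∈ s with p x, f x ≤ #{x ∈ s | p x} • M :=
        sum_le_card_nsmul _ _ _ fun x hx => hM x (mem_filter.mp hx).1 (mem_filter.mp hx).2
    _ ≤ N * M := Nat.mul_le_mul_right M hN

lemma count_le_gcd_mul_gcd_mul_gcd {D₁ D₂ : ℕ} (hD₁ : 0 < D₁) (hD₂ : 0 < D₂) (r₁ r₂ y₁ x₂ : ℤ) :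
    ∑ b₁ ∈ range D₁, ∑ c₁ ∈ range D₁, ∑ b₂ ∈ range D₂, ∑ c₂ ∈ range D₂,
        (if (D₁ : ℤ) ∣ r₁ * b₁ - y₁ ∧ (D₂ : ℤ) ∣ r₂ * b₂ - x₂ ∧
            (D₁ : ℤ) * c₂ + (b₁ : ℤ) * b₂ + (D₂ : ℤ) * c₁ ≡ 0 [ZMOD ((D₁ : ℤ) * D₂)]
          then 1 else 0 : ℕ) ≤
      Int.gcd r₁ D₁ * Int.gcd r₂ D₂ * Nat.gcd D₁ D₂ := by
  rw [sum_congr rfl fun b₁ _ => sum_comm]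
  simp only [ite_and, sum_ite_irrel, sum_const_zero]
  rw [mul_assoc]
  refine sum_ite_le_mul (card_filter_dvd_mul_sub_le_gcd hD₁ r₁ y₁) fun b₁ _ _ =>
    sum_ite_le_mul (card_filter_dvd_mul_sub_le_gcd hD₂ r₂ x₂) fun b₂ _ _ => ?_
  rw [← sum_product', sum_boole]
  exact card_filter_modEq_zero_le_gcd hD₁ _

theorem shat_general_bound_general (r₁ s₁ r₂ s₂ : ℤ)
    (x₁ y₁ x₂ y₂ : ℤ) (D₁ D₂ : ℕ) (hD₁ : 0 < D₁) (hD₂ : 0 < D₂) :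
    ‖Shat r₁ s₁ r₂ s₂ x₁ y₁ x₂ y₂ D₁ D₂‖
      ≤ (Int.gcd r₁ (D₁ : ℤ) : ℝ) * (Int.gcd r₂ (D₂ : ℤ) : ℝ) * (Nat.gcd D₁ D₂ : ℝ) := by
  rw [Shat_eq_count _ _ _ _ _ _ _ _ hD₁.ne' hD₂.ne', Complex.norm_natCast]
  refine (Nat.cast_le.mpr <| le_trans (sum_le_sum fun b₁ _ => sum_le_sum fun c₁ _ =>
    sum_le_sum fun b₂ _ => sum_le_sum fun c₂ _ => ?_)
      (count_le_gcd_mul_gcd_mul_gcd hD₁ hD₂ r₁ r₂ y₁ x₂)).trans_eq (by push_cast; rfl)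
  split_ifs <;> tauto

theorem shat_general_bound (r₁ s₁ r₂ s₂ : ℤ)
    (hr₁ : r₁ ≠ 0) (hs₁ : s₁ ≠ 0) (hr₂ : r₂ ≠ 0) (hs₂ : s₂ ≠ 0)
    (x₁ y₁ x₂ y₂ : ℤ) (D₁ D₂ : ℕ) (hD₁ : 0 < D₁) (hD₂ : 0 < D₂) :
    ‖Shat r₁ s₁ r₂ s₂ x₁ y₁ x₂ y₂ D₁ D₂‖
      ≤ (Int.gcd r₁ (D₁ : ℤ) : ℝ) * (Int.gcd r₂ (D₂ : ℤ) : ℝ) * (Nat.gcd D₁ D₂ : ℝ) :=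
  shat_general_bound_general r₁ s₁ r₂ s₂ x₁ y₁ x₂ y₂ D₁ D₂ hD₁ hD₂
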